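/- arXiv:1704.01412 — 6 statements merged into one kernel-verified Lean document; each statement's English description precedes it below -/
import Mathlib

section
/- For every W ∈ D₂, the vertical component ϕW of φW lies in D₂; that is, ϕ(D₂) ⊆ D₂. -/
open RealInnerProductSpace

theorem phi_D2_subset_D2
    {V : Type*} [NormedAddCommGroup V] [InnerProductSpace ℝ V] [FiniteDimensional ℝ V]
    (φ : V →ₗ[ℝ] V) (ξ : V) (η : V →ₗ[ℝ] ℝ)
    (hφφ : ∀ X, φ (φ X) = -X + η X • ξ)
    (hηξ : η ξ = 1)
    (hφξ : φ ξ = 0)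
    (hηφ : ∀ X, η (φ X) = 0)
    (hmet : ∀ X Y, ⟪φ X, φ Y⟫ = ⟪X, Y⟫ - η X * η Y)
    (K : Submodule ℝ V) (hξK : ξ ∈ Kᗮ)
    (ϕ ω : V → V)
    (hϕK : ∀ U ∈ K, ϕ U ∈ K) (hωK : ∀ U ∈ K, ω U ∈ Kᗮ)
    (hVdec : ∀ U ∈ K, φ U = ϕ U + ω U)
    (B C : V → V)
    (hBK : ∀ X ∈ Kᗮ, B X ∈ K) (hCK : ∀ X ∈ Kᗮ, C X ∈ Kᗮ)
    (hHdec : ∀ X ∈ Kᗮ, φ X = B X + C X)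
    (D₁ : Submodule ℝ V) (hD₁K : D₁ ≤ K) (hφD₁ : D₁.map φ = D₁)
    (D₂ : Submodule ℝ V) (hD₂ : D₂ = K ⊓ D₁ᗮ)
    :
    ∀ W ∈ D₂, ϕ W ∈ D₂ := by
  -- η X = ⟪X, ξ⟫
  have hη : ∀ X : V, η X = ⟪X, ξ⟫ := by
    intro X
    have := hmet X ξ
    rw [hφξ, inner_zero_right, hηξ, mul_one] at this
    linarith
  -- ⟪φX, ξ⟫ = 0
  have hφperpξ : ∀ X : V, ⟪φ X, ξ⟫ = (0:ℝ) := by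
    intro X
    rw [← hη]; exact hηφ X
  -- skew symmetry
  have hskew : ∀ X Y : V, ⟪φ X, Y⟫ = -⟪X, φ Y⟫ := by
    intro X Y
    have hY : Y = -(φ (φ Y)) + η Y • ξ := by
      rw [hφφ]; abel
    calc ⟪φ X, Y⟫ = ⟪φ X, -(φ (φ Y)) + η Y • ξ⟫ := by rw [← hY]
      _ = -⟪φ X, φ (φ Y)⟫ + η Y * ⟪φ X, ξ⟫ := by
          rw [inner_add_right, inner_neg_right, real_inner_smul_right]
      _ = -(⟪X, φ Y⟫ - η X * η (φ Y)) + η Y * 0 := by rw [hmet, hφperpξ]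
      _ = -⟪X, φ Y⟫ := by rw [hηφ]; ring
  intro W hW
  rw [hD₂] at hW ⊢
  obtain ⟨hWK, hWD⟩ := hW
  refine ⟨hϕK W hWK, ?_⟩
  intro Z hZ
  have hZK : Z ∈ K := hD₁K hZ
  have hφZ : φ Z ∈ D₁ := by
    rw [← hφD₁]; exact ⟨Z, hZ, rfl⟩
  have hω : ⟪Z, ω W⟫ = (0:ℝ) := hωK W hWK Z hZK
  have h1 : ϕ W = φ W - ω W := by rw [hVdec W hWK]; abel
  have : ⟪Z, ϕ W⟫ = ⟪Z, φ W⟫ - ⟪Z, ω W⟫ := by rw [h1, inner_sub_right]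
  rw [this, hω, sub_zero, real_inner_comm, hskew, real_inner_comm]
  rw [hWD (φ Z) hφZ]
  ring
end

section
/- For every X ∈ K^⊥, the vertical component BX of φX lies in D₂, so B(K^⊥) ⊆ D₂; moreover, if the semi-slant angle θ satisfies sin θ ≠ 0, then B(K^⊥) = D₂. -/
open RealInnerProductSpace

theorem B_horizontal_eq_D2
    {V : Type*} [NormedAddCommGroup V] [InnerProductSpace ℝ V] [FiniteDimensional ℝ V]
    (φ : V →ₗ[ℝ] V) (ξ : V) (η : V →ₗ[ℝ] ℝ)
    (hφφ : ∀ X, φ (φ X) = -X + η X • ξ)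
    (hηξ : η ξ = 1)
    (hφξ : φ ξ = 0)
    (hηφ : ∀ X, η (φ X) = 0)
    (hmet : ∀ X Y, ⟪φ X, φ Y⟫ = ⟪X, Y⟫ - η X * η Y)
    (K : Submodule ℝ V) (hξK : ξ ∈ Kᗮ)
    (ϕ ω : V → V)
    (hϕK : ∀ U ∈ K, ϕ U ∈ K) (hωK : ∀ U ∈ K, ω U ∈ Kᗮ)
    (hVdec : ∀ U ∈ K, φ U = ϕ U + ω U)
    (B C : V → V)
    (hBK : ∀ X ∈ Kᗮ, B X ∈ K) (hCK : ∀ X ∈ Kᗮ, C X ∈ Kᗮ)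
    (hHdec : ∀ X ∈ Kᗮ, φ X = B X + C X)
    (D₁ : Submodule ℝ V) (hD₁K : D₁ ≤ K) (hφD₁ : D₁.map φ = D₁)
    (D₂ : Submodule ℝ V) (hD₂ : D₂ = K ⊓ D₁ᗮ)
    (θ : ℝ) (hslant : ∀ U ∈ D₂, U ≠ 0 → ‖ϕ U‖ = Real.cos θ * ‖φ U‖)
    :
    (∀ X ∈ Kᗮ, B X ∈ D₂) ∧ (Real.sin θ ≠ 0 → {v : V | ∃ X ∈ Kᗮ, B X = v} = (D₂ : Set V)) := by
  -- basic orthogonality facts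
  have hKot : ∀ a ∈ K, ∀ b ∈ Kᗮ, ⟪a, b⟫ = 0 := fun a ha b hb =>
    (Submodule.mem_orthogonal K b).mp hb a ha
  have hz : ∀ v ∈ K, v ∈ Kᗮ → v = 0 := fun v hv hv' =>
    inner_self_eq_zero.mp (hKot v hv v hv')
  have uniq : ∀ a ∈ K, ∀ b ∈ Kᗮ, ∀ a' ∈ K, ∀ b' ∈ Kᗮ, a + b = a' + b' → a = a' := by
    intro a ha b hb a' ha' b' hb' heq
    have h1 : a - a' = b' - b := by
      have : a + b - (a' + b) = a' + b' - (a' + b) := by rw [heq]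
      calc a - a' = a + b - (a' + b) := by abel
        _ = a' + b' - (a' + b) := this
        _ = b' - b := by abel
    have hmem1 : a - a' ∈ K := K.sub_mem ha ha'
    have hmem2 : a - a' ∈ Kᗮ := h1 ▸ Kᗮ.sub_mem hb' hb
    have := hz _ hmem1 hmem2
    exact sub_eq_zero.mp this
  -- η X = ⟪X, ξ⟫
  have ηeq : ∀ X, η X = ⟪X, ξ⟫ := by
    intro X
    have h := hmet X ξ
    rw [hφξ, hηξ, inner_zero_right] at h
    linarith
  -- skew-symmetry of φ
  have hφξ' : ∀ X, ⟪φ X, ξ⟫ = 0 := fun X => (ηeq (φ X)) ▸ hηφ X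
  have skew : ∀ X Y, ⟪φ X, Y⟫ = -⟪X, φ Y⟫ := by
    intro X Y
    have h1 := hmet X (φ Y)
    rw [hφφ Y, hηφ Y, mul_zero, sub_zero, inner_add_right, inner_neg_right,
      real_inner_smul_right, hφξ' X, mul_zero, add_zero] at h1
    linarith
  -- η vanishes on K
  have ηK : ∀ v ∈ K, η v = 0 := fun v hv => by rw [ηeq]; exact hKot v hv ξ hξK
  -- membership of K in D₂ elements
  have memK : ∀ v ∈ D₂, v ∈ K := fun v hv => by
    rw [hD₂] at hv; exact hv.1
  have memD1o : ∀ v ∈ D₂, v ∈ D₁ᗮ := fun v hv => by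
    rw [hD₂] at hv; exact hv.2
  -- Part 1 : B X ∈ D₂
  have part1 : ∀ X ∈ Kᗮ, B X ∈ D₂ := by
    intro X hX
    rw [hD₂, Submodule.mem_inf]
    refine ⟨hBK X hX, ?_⟩
    rw [Submodule.mem_orthogonal]
    intro Z hZ
    have hZK : Z ∈ K := hD₁K hZ
    have hφZ : φ Z ∈ D₁ := by
      rw [← hφD₁]; exact Submodule.mem_map_of_mem hZ
    have h1 : ⟪Z, φ X⟫ = 0 := by
      have := skew Z X
      have h2 : ⟪φ Z, X⟫ = 0 := hKot (φ Z) (hD₁K hφZ) X hX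
      linarith
    have h2 : ⟪Z, C X⟫ = 0 := hKot Z hZK (C X) (hCK X hX)
    have h3 : φ X = B X + C X := hHdec X hX
    have h4 : ⟪Z, φ X⟫ = ⟪Z, B X⟫ + ⟪Z, C X⟫ := by rw [h3, inner_add_right]
    linarith
  refine ⟨part1, ?_⟩
  -- skew-symmetry of ϕ on K
  have skewϕ : ∀ a ∈ K, ∀ b ∈ K, ⟪ϕ a, b⟫ = -⟪a, ϕ b⟫ := by
    intro a ha b hb
    have h1 : ⟪φ a, b⟫ = ⟪ϕ a, b⟫ + ⟪ω a, b⟫ := by rw [hVdec a ha, inner_add_left]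
    have h2 : ⟪a, φ b⟫ = ⟪a, ϕ b⟫ + ⟪a, ω b⟫ := by rw [hVdec b hb, inner_add_right]
    have h3 : ⟪ω a, b⟫ = 0 := by
      rw [real_inner_comm]; exact hKot b hb (ω a) (hωK a ha)
    have h4 : ⟪a, ω b⟫ = 0 := hKot a ha (ω b) (hωK b hb)
    have h5 := skew a b
    linarith
  -- ϕ maps D₂ into D₂
  have ϕmem : ∀ v ∈ D₂, ϕ v ∈ D₂ := by
    intro v hv
    rw [hD₂, Submodule.mem_inf]
    refine ⟨hϕK v (memK v hv), ?_⟩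
    rw [Submodule.mem_orthogonal]
    intro Z hZ
    have hZK : Z ∈ K := hD₁K hZ
    have hφZ : φ Z ∈ D₁ := by rw [← hφD₁]; exact Submodule.mem_map_of_mem hZ
    have h1 : ⟪φ Z, v⟫ = 0 := (Submodule.mem_orthogonal D₁ v).mp (memD1o v hv) (φ Z) hφZ
    have h2 := skew Z v
    have h3 : ⟪Z, φ v⟫ = ⟪Z, ϕ v⟫ + ⟪Z, ω v⟫ := by
      rw [hVdec v (memK v hv), inner_add_right]
    have h4 : ⟪Z, ω v⟫ = 0 := hKot Z hZK (ω v) (hωK v (memK v hv))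
    linarith
  -- additivity of ϕ on K
  have ϕadd : ∀ a ∈ K, ∀ b ∈ K, ϕ (a + b) = ϕ a + ϕ b := by
    intro a ha b hb
    have hab : a + b ∈ K := K.add_mem ha hb
    have h1 : ϕ (a + b) + ω (a + b) = (ϕ a + ϕ b) + (ω a + ω b) := by
      rw [← hVdec (a + b) hab]
      rw [map_add, hVdec a ha, hVdec b hb]
      abel
    exact uniq (ϕ (a + b)) (hϕK _ hab) (ω (a + b)) (hωK _ hab)
      (ϕ a + ϕ b) (K.add_mem (hϕK a ha) (hϕK b hb))
      (ω a + ω b) (Kᗮ.add_mem (hωK a ha) (hωK b hb)) h1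
  -- the quadratic identity from the slant condition
  have ϕQ : ∀ v ∈ D₂, ⟪v, ϕ (ϕ v)⟫ = -(Real.cos θ ^ 2) * ⟪v, v⟫ := by
    intro v hv
    by_cases hne : v = 0
    · simp [hne]
    · have hs := hslant v hv hne
      have hvK := memK v hv
      have hn1 : ⟪φ v, φ v⟫ = ⟪v, v⟫ := by
        rw [hmet, ηK v hvK]; ring
      have hn2 : ⟪ϕ v, ϕ v⟫ = ‖ϕ v‖ ^ 2 := real_inner_self_eq_norm_sq (ϕ v)
      have hn3 : ⟪φ v, φ v⟫ = ‖φ v‖ ^ 2 := real_inner_self_eq_norm_sq (φ v)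
      have hn4 : ⟪v, v⟫ = ‖v‖ ^ 2 := real_inner_self_eq_norm_sq v
      have h1 := skewϕ (ϕ v) (hϕK v hvK) v hvK
      have h2 : ⟪v, ϕ (ϕ v)⟫ = ⟪ϕ (ϕ v), v⟫ := real_inner_comm _ _
      have hsq : ‖ϕ v‖ ^ 2 = Real.cos θ ^ 2 * ⟪v, v⟫ := by
        rw [hs, mul_pow, ← hn3, hn1]
      linarith
  -- ϕ² = -cos²θ on D₂
  have ϕsq : ∀ v ∈ D₂, ϕ (ϕ v) = (-(Real.cos θ ^ 2)) • v := by
    have key : ∀ u ∈ D₂, ∀ w ∈ D₂, ⟪u, ϕ (ϕ w)⟫ + Real.cos θ ^ 2 * ⟪u, w⟫ = 0 := by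
      intro u hu w hw
      have huK := memK u hu
      have hwK := memK w hw
      have h1 := ϕQ (u + w) (D₂.add_mem hu hw)
      have h2 := ϕQ u hu
      have h3 := ϕQ w hw
      have e1 : ϕ (u + w) = ϕ u + ϕ w := ϕadd u huK w hwK
      have e2 : ϕ (ϕ u + ϕ w) = ϕ (ϕ u) + ϕ (ϕ w) :=
        ϕadd (ϕ u) (hϕK u huK) (ϕ w) (hϕK w hwK)
      rw [e1, e2] at h1
      have sym : ⟪w, ϕ (ϕ u)⟫ = ⟪u, ϕ (ϕ w)⟫ := by
        have a1 := skewϕ (ϕ u) (hϕK u huK) w hwK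
        have a2 := skewϕ (ϕ w) (hϕK w hwK) u huK
        have a3 := skewϕ (ϕ u) (hϕK u huK) (ϕ w) (hϕK w hwK)
        have c1 := real_inner_comm w (ϕ (ϕ u))
        have c2 := real_inner_comm u (ϕ (ϕ w))
        have c3 := real_inner_comm (ϕ u) (ϕ w)
        linarith
      simp only [inner_add_left, inner_add_right] at h1
      have c4 := real_inner_comm u w
      linear_combination h1 / 2 - h2 / 2 - h3 / 2 - sym / 2 - (Real.cos θ ^ 2) / 2 * c4
    intro v hv
    have hSv : ϕ (ϕ v) + (Real.cos θ ^ 2) • v ∈ D₂ :=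
      D₂.add_mem (ϕmem _ (ϕmem v hv)) (D₂.smul_mem _ hv)
    have h0 := key _ hSv v hv
    have hss : ⟪ϕ (ϕ v) + (Real.cos θ ^ 2) • v, ϕ (ϕ v) + (Real.cos θ ^ 2) • v⟫ = 0 := by
      rw [inner_add_right, real_inner_smul_right]
      linarith
    have hz0 := inner_self_eq_zero.mp hss
    have : ϕ (ϕ v) = -((Real.cos θ ^ 2) • v) := eq_neg_of_add_eq_zero_left hz0
    rw [this, neg_smul]
  -- the key formula B(ω v) = (cos²θ - 1) • v for v ∈ D₂
  have Bω : ∀ v ∈ D₂, B (ω v) = (Real.cos θ ^ 2 - 1) • v := by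
    intro v hv
    have hvK := memK v hv
    have h := hφφ v
    rw [ηK v hvK, zero_smul, add_zero] at h
    rw [hVdec v hvK, map_add, hVdec (ϕ v) (hϕK v hvK), hHdec (ω v) (hωK v hvK)] at h
    have h1 : (ϕ (ϕ v) + B (ω v)) + (ω (ϕ v) + C (ω v)) = (-v) + 0 := by
      rw [← h]; abel
    have h2 : ϕ (ϕ v) + B (ω v) = -v :=
      uniq _ (K.add_mem (hϕK (ϕ v) (hϕK v hvK)) (hBK (ω v) (hωK v hvK)))
        _ (Kᗮ.add_mem (hωK (ϕ v) (hϕK v hvK)) (hCK (ω v) (hωK v hvK)))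
        (-v) (K.neg_mem hvK) 0 (Kᗮ.zero_mem) h1
    have h3 := ϕsq v hv
    have : B (ω v) = -v - ϕ (ϕ v) := by
      rw [eq_sub_iff_add_eq]; rw [← h2]; abel
    rw [this, h3]
    module
  -- Part 2
  intro hs
  ext v
  simp only [Set.mem_setOf_eq, SetLike.mem_coe]
  constructor
  · rintro ⟨X, hX, rfl⟩
    exact part1 X hX
  · intro hv
    have hs2 : Real.sin θ ^ 2 ≠ 0 := pow_ne_zero 2 hs
    have hωv : ω v ∈ Kᗮ := hωK v (memK v hv)
    set t : ℝ := -(Real.sin θ ^ 2)⁻¹ with ht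
    refine ⟨t • ω v, Kᗮ.smul_mem t hωv, ?_⟩
    have hX : t • ω v ∈ Kᗮ := Kᗮ.smul_mem t hωv
    have h1 : B (t • ω v) + C (t • ω v) = t • B (ω v) + t • C (ω v) := by
      rw [← hHdec _ hX, map_smul, hHdec (ω v) hωv, smul_add]
    have h2 : B (t • ω v) = t • B (ω v) :=
      uniq _ (hBK _ hX) _ (hCK _ hX) _ (K.smul_mem t (hBK (ω v) hωv))
        _ (Kᗮ.smul_mem t (hCK (ω v) hωv)) h1
    rw [h2, Bω v hv, smul_smul]
    have hpc : Real.sin θ ^ 2 + Real.cos θ ^ 2 = 1 := Real.sin_sq_add_cos_sq θ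
    have : t * (Real.cos θ ^ 2 - 1) = 1 := by
      rw [ht]
      field_simp
      linarith
    rw [this, one_smul]
end

section
/- For every W ∈ D₂ one has ϕ(ϕW) = -(cos² θ)·W. -/
open RealInnerProductSpace

theorem phi_sq_on_D2
    {V : Type*} [NormedAddCommGroup V] [InnerProductSpace ℝ V] [FiniteDimensional ℝ V]
    (φ : V →ₗ[ℝ] V) (ξ : V) (η : V →ₗ[ℝ] ℝ)
    (hφφ : ∀ X, φ (φ X) = -X + η X • ξ)
    (hηξ : η ξ = 1)
    (hφξ : φ ξ = 0)
    (hηφ : ∀ X, η (φ X) = 0)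
    (hmet : ∀ X Y, ⟪φ X, φ Y⟫ = ⟪X, Y⟫ - η X * η Y)
    (K : Submodule ℝ V) (hξK : ξ ∈ Kᗮ)
    (ϕ ω : V → V)
    (hϕK : ∀ U ∈ K, ϕ U ∈ K) (hωK : ∀ U ∈ K, ω U ∈ Kᗮ)
    (hVdec : ∀ U ∈ K, φ U = ϕ U + ω U)
    (B C : V → V)
    (hBK : ∀ X ∈ Kᗮ, B X ∈ K) (hCK : ∀ X ∈ Kᗮ, C X ∈ Kᗮ)
    (hHdec : ∀ X ∈ Kᗮ, φ X = B X + C X)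
    (D₁ : Submodule ℝ V) (hD₁K : D₁ ≤ K) (hφD₁ : D₁.map φ = D₁)
    (D₂ : Submodule ℝ V) (hD₂ : D₂ = K ⊓ D₁ᗮ)
    (θ : ℝ) (hslant : ∀ U ∈ D₂, U ≠ 0 → ‖ϕ U‖ = Real.cos θ * ‖φ U‖)
    :
    ∀ W ∈ D₂, ϕ (ϕ W) = -(Real.cos θ ^ 2) • W := by
  -- η X = ⟪X, ξ⟫
  have hη : ∀ X : V, η X = ⟪X, ξ⟫ := by
    intro X
    have h := hmet X ξ
    rw [hφξ, inner_zero_right, hηξ, mul_one] at h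
    linarith
  -- ⟪φ X, ξ⟫ = 0
  have hφξ0 : ∀ X : V, ⟪φ X, ξ⟫ = 0 := by
    intro X; rw [← hη]; exact hηφ X
  -- skew-symmetry of φ
  have hskewφ : ∀ X Y : V, ⟪φ X, Y⟫ = -⟪X, φ Y⟫ := by
    intro X Y
    have h := hmet X (φ Y)
    rw [hφφ, hηφ, mul_zero, sub_zero, inner_add_right, inner_neg_right,
      real_inner_smul_right, hφξ0, mul_zero, add_zero] at h
    linarith
  -- orthogonality facts
  have hKperp : ∀ Z ∈ K, ∀ X ∈ Kᗮ, ⟪Z, X⟫ = (0:ℝ) := by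
    intro Z hZ X hX
    exact (Submodule.mem_orthogonal K X).mp hX Z hZ
  have hηK : ∀ U ∈ K, η U = 0 := by
    intro U hU; rw [hη]; exact hKperp U hU ξ hξK
  -- ϕ U is the projection: inner products against K agree with φ U
  have hϕproj : ∀ U ∈ K, ∀ Z ∈ K, ⟪ϕ U, Z⟫ = ⟪φ U, Z⟫ := by
    intro U hU Z hZ
    rw [hVdec U hU, inner_add_left]
    have : ⟪ω U, Z⟫ = (0:ℝ) := by
      rw [real_inner_comm]; exact hKperp Z hZ (ω U) (hωK U hU)
    rw [this, add_zero]
  -- skew-symmetry of ϕ on K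
  have hskewϕ : ∀ U ∈ K, ∀ W ∈ K, ⟪ϕ U, W⟫ = -⟪U, ϕ W⟫ := by
    intro U hU W hW
    rw [hϕproj U hU W hW, hskewφ, hVdec W hW, inner_add_right,
      hKperp U hU (ω W) (hωK W hW), add_zero]
  -- additivity of ϕ on K
  have hKinfperp : ∀ d : V, d ∈ K → d ∈ Kᗮ → d = 0 := by
    intro d hd hd'
    have : ⟪d, d⟫ = (0:ℝ) := hKperp d hd d hd'
    exact inner_self_eq_zero.mp this
  have hϕadd : ∀ U ∈ K, ∀ W ∈ K, ϕ (U + W) = ϕ U + ϕ W := by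
    intro U hU W hW
    have hUW : U + W ∈ K := K.add_mem hU hW
    set d := ϕ (U + W) - ϕ U - ϕ W with hd
    have hdK : d ∈ K := K.sub_mem (K.sub_mem (hϕK _ hUW) (hϕK U hU)) (hϕK W hW)
    have hdK' : d ∈ Kᗮ := by
      have e1 : ϕ U = φ U - ω U := eq_sub_of_add_eq (hVdec U hU).symm
      have e2 : ϕ W = φ W - ω W := eq_sub_of_add_eq (hVdec W hW).symm
      have e3 : ϕ (U + W) = φ (U + W) - ω (U + W) := eq_sub_of_add_eq (hVdec _ hUW).symm
      have hded : d = ω U + ω W - ω (U + W) := by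
        rw [hd, e1, e2, e3, map_add]; abel
      rw [hded]
      exact Submodule.sub_mem _ (Submodule.add_mem _ (hωK U hU) (hωK W hW)) (hωK _ hUW)
    have h0 := hKinfperp d hdK hdK'
    rw [hd, sub_eq_zero, sub_eq_iff_eq_add] at h0
    rw [h0]; abel
  -- D₂ facts
  have hD₂K : ∀ U ∈ D₂, U ∈ K := by
    intro U hU; rw [hD₂] at hU; exact hU.1
  have hD₂perp : ∀ U ∈ D₂, U ∈ D₁ᗮ := by
    intro U hU; rw [hD₂] at hU; exact hU.2
  -- ϕ maps D₂ into D₂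
  have hϕD₂ : ∀ W ∈ D₂, ϕ W ∈ D₂ := by
    intro W hW
    rw [hD₂, Submodule.mem_inf]
    refine ⟨hϕK W (hD₂K W hW), (Submodule.mem_orthogonal D₁ (ϕ W)).mpr ?_⟩
    intro Z hZ
    have hZK : Z ∈ K := hD₁K hZ
    have hφZ : φ Z ∈ D₁ := by
      rw [← hφD₁]; exact Submodule.mem_map_of_mem hZ
    have : ⟪W, φ Z⟫ = (0:ℝ) := by
      rw [real_inner_comm]
      exact (Submodule.mem_orthogonal D₁ W).mp (hD₂perp W hW) (φ Z) hφZ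
    have h2 : ⟪ϕ W, Z⟫ = (0:ℝ) := by
      rw [hϕproj W (hD₂K W hW) Z hZK, hskewφ, this, neg_zero]
    rw [real_inner_comm]; exact h2
  -- ϕ 0 = 0
  have hϕ0 : ϕ (0:V) = 0 := by
    apply hKinfperp _ (hϕK 0 K.zero_mem)
    have h := hVdec 0 K.zero_mem
    rw [map_zero] at h
    rw [eq_neg_of_add_eq_zero_left h.symm]
    exact Submodule.neg_mem _ (hωK 0 K.zero_mem)
  -- squared slant condition
  have hsq : ∀ U ∈ D₂, ⟪ϕ U, ϕ U⟫ = Real.cos θ ^ 2 * ⟪U, U⟫ := by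
    intro U hU
    by_cases h0 : U = 0
    · rw [h0, hϕ0]; simp
    · have h := hslant U hU h0
      have hφn : ⟪φ U, φ U⟫ = ⟪U, U⟫ := by
        rw [hmet, hηK U (hD₂K U hU), mul_zero, sub_zero]
      have h1 : ‖ϕ U‖ ^ 2 = (Real.cos θ * ‖φ U‖) ^ 2 := by rw [h]
      rw [mul_pow] at h1
      rw [← real_inner_self_eq_norm_sq, ← real_inner_self_eq_norm_sq, hφn] at h1
      exact h1
  -- polarization
  have hpolar : ∀ U ∈ D₂, ∀ W ∈ D₂, ⟪ϕ U, ϕ W⟫ = Real.cos θ ^ 2 * ⟪U, W⟫ := by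
    intro U hU W hW
    have hUW : U + W ∈ D₂ := D₂.add_mem hU hW
    have h1 := hsq (U + W) hUW
    have h2 := hsq U hU
    have h3 := hsq W hW
    rw [hϕadd U (hD₂K U hU) W (hD₂K W hW)] at h1
    rw [inner_add_add_self, inner_add_add_self] at h1
    have c1 := real_inner_comm (ϕ U) (ϕ W)
    have c2 := real_inner_comm U W
    linear_combination (h1 - h2 - h3 - c1 + Real.cos θ ^ 2 * c2) / 2
  -- conclusion
  intro W hW
  set d := ϕ (ϕ W) + (Real.cos θ ^ 2) • W with hdd
  have hdD₂ : d ∈ D₂ := D₂.add_mem (hϕD₂ _ (hϕD₂ W hW)) (D₂.smul_mem _ hW)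
  have hdU : ∀ U ∈ D₂, ⟪d, U⟫ = (0:ℝ) := by
    intro U hU
    rw [hdd, inner_add_left, real_inner_smul_left,
      hskewϕ (ϕ W) (hϕK W (hD₂K W hW)) U (hD₂K U hU)]
    linarith [hpolar W hW U hU]
  have := hdU d hdD₂
  have hd0 : d = 0 := inner_self_eq_zero.mp this
  rw [hdd] at hd0
  rw [neg_smul] at *
  exact eq_neg_of_add_eq_zero_left hd0
end

section
/- For all W₁, W₂ ∈ D₂ one has ⟨ωW₁, ωW₂⟩ = sin² θ · ⟨W₁, W₂⟩. -/
/-!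
For `W ∈ D₂ ⊆ K` we have `W ⊥ ξ`, so `η W = 0` and `‖φ W‖ = ‖W‖`. Since `φ W = ϕ W + ω W` is an
orthogonal splitting, Pythagoras and the slant condition give `‖ω W‖² = sin² θ ‖W‖²`. Uniqueness of
the decomposition along `K ⊕ Kᗮ` makes `ω` additive on `K`, and polarization turns the quadratic
identity into the bilinear one.
-/

open RealInnerProductSpace

section OrthogonalDecomposition

variable {𝕜 E : Type*} [RCLike 𝕜] [NormedAddCommGroup E] [InnerProductSpace 𝕜 E]
  {K : Submodule 𝕜 E}

theorem Submodule.eq_of_add_eq_add_of_mem_orthogonal {a a' b b' : E} (ha : a ∈ K) (ha' : a' ∈ K)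
    (hb : b ∈ Kᗮ) (hb' : b' ∈ Kᗮ) (h : a + b = a' + b') : b = b' := by
  have hba : b - b' = a' - a := by
    rw [sub_eq_sub_iff_add_eq_add, add_comm b, h, add_comm]
  have hzero : b - b' = 0 :=
    Submodule.disjoint_def'.mp K.orthogonal_disjoint.symm _ (Kᗮ.sub_mem hb hb') _
      (K.sub_mem ha' ha) hba
  exact sub_eq_zero.mp hzero

variable {f : E →ₗ[𝕜] E} {ϕ ω : E → E}

theorem orthogonalPart_add (hϕ : ∀ U ∈ K, ϕ U ∈ K) (hω : ∀ U ∈ K, ω U ∈ Kᗮ)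
    (hf : ∀ U ∈ K, f U = ϕ U + ω U) {U W : E} (hU : U ∈ K) (hW : W ∈ K) :
    ω (U + W) = ω U + ω W := by
  refine K.eq_of_add_eq_add_of_mem_orthogonal (hϕ _ (K.add_mem hU hW))
    (K.add_mem (hϕ U hU) (hϕ W hW)) (hω _ (K.add_mem hU hW))
    (Kᗮ.add_mem (hω U hU) (hω W hW)) ?_
  rw [← hf _ (K.add_mem hU hW), map_add, hf U hU, hf W hW]
  abel

theorem orthogonalPart_zero (hϕ : ∀ U ∈ K, ϕ U ∈ K) (hω : ∀ U ∈ K, ω U ∈ Kᗮ)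
    (hf : ∀ U ∈ K, f U = ϕ U + ω U) : ω 0 = 0 := by
  have h := orthogonalPart_add hϕ hω hf K.zero_mem K.zero_mem
  rwa [add_zero, left_eq_add] at h

end OrthogonalDecomposition

section Real

variable {E F : Type*} [NormedAddCommGroup E] [InnerProductSpace ℝ E]
  [NormedAddCommGroup F] [InnerProductSpace ℝ F]

theorem inner_map_eq_of_inner_self_map_eq {S : Submodule ℝ E} {g : E → F}
    (hadd : ∀ U ∈ S, ∀ W ∈ S, g (U + W) = g U + g W) {c : ℝ}
    (hself : ∀ W ∈ S, ⟪g W, g W⟫ = c * ⟪W, W⟫) {U W : E} (hU : U ∈ S) (hW : W ∈ S) :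
    ⟪g U, g W⟫ = c * ⟪U, W⟫ := by
  have hsum := hself _ (S.add_mem hU hW)
  rw [hadd U hU W hW, real_inner_add_add_self, real_inner_add_add_self, hself U hU,
    hself W hW] at hsum
  linarith

theorem norm_sq_eq_sin_sq_mul_of_inner_eq_zero {a b : E} {θ r : ℝ} (hab : ⟪a, b⟫ = 0)
    (hnorm : ‖a + b‖ = r) (hcos : ‖a‖ = Real.cos θ * r) :
    ‖b‖ ^ 2 = Real.sin θ ^ 2 * r ^ 2 := by
  have hpyth := norm_add_sq_eq_norm_sq_add_norm_sq_of_inner_eq_zero a b hab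
  rw [hnorm, hcos] at hpyth
  linear_combination -hpyth - r ^ 2 * Real.sin_sq_add_cos_sq θ

end Real

section AlmostContactMetric

variable {V : Type*} [NormedAddCommGroup V] [InnerProductSpace ℝ V]
  {φ : V →ₗ[ℝ] V} {ξ : V} {η : V →ₗ[ℝ] ℝ}

theorem eta_eq_inner_xi (hηξ : η ξ = 1) (hφξ : φ ξ = 0)
    (hmet : ∀ X Y, ⟪φ X, φ Y⟫ = ⟪X, Y⟫ - η X * η Y) (X : V) : η X = ⟪X, ξ⟫ := by
  have h := hmet X ξ
  rw [hφξ, inner_zero_right, hηξ] at h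
  linarith

theorem norm_map_eq_of_eta_eq_zero (hmet : ∀ X Y, ⟪φ X, φ Y⟫ = ⟪X, Y⟫ - η X * η Y) {X : V}
    (hX : η X = 0) : ‖φ X‖ = ‖X‖ := by
  have h := hmet X X
  rw [hX, mul_zero, sub_zero, real_inner_self_eq_norm_sq, real_inner_self_eq_norm_sq] at h
  exact (pow_left_inj₀ (norm_nonneg _) (norm_nonneg _) two_ne_zero).mp h

end AlmostContactMetric

theorem inner_omega_omega_on_D2_general
    {V : Type*} [NormedAddCommGroup V] [InnerProductSpace ℝ V]
    (φ : V →ₗ[ℝ] V) (ξ : V) (η : V →ₗ[ℝ] ℝ)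
    (hηξ : η ξ = 1)
    (hφξ : φ ξ = 0)
    (hmet : ∀ X Y, ⟪φ X, φ Y⟫ = ⟪X, Y⟫ - η X * η Y)
    (K : Submodule ℝ V) (hξK : ξ ∈ Kᗮ)
    (ϕ ω : V → V)
    (hϕK : ∀ U ∈ K, ϕ U ∈ K) (hωK : ∀ U ∈ K, ω U ∈ Kᗮ)
    (hVdec : ∀ U ∈ K, φ U = ϕ U + ω U)
    (D₁ : Submodule ℝ V)
    (D₂ : Submodule ℝ V) (hD₂ : D₂ = K ⊓ D₁ᗮ)
    (θ : ℝ) (hslant : ∀ U ∈ D₂, U ≠ 0 → ‖ϕ U‖ = Real.cos θ * ‖φ U‖)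
    :
    ∀ W₁ ∈ D₂, ∀ W₂ ∈ D₂, ⟪ω W₁, ω W₂⟫ = Real.sin θ ^ 2 * ⟪W₁, W₂⟫ := by
  have hD₂K : D₂ ≤ K := hD₂ ▸ inf_le_left
  have hnorm : ∀ U ∈ K, ‖φ U‖ = ‖U‖ := fun U hU =>
    norm_map_eq_of_eta_eq_zero hmet <| by
      rw [eta_eq_inner_xi hηξ hφξ hmet]
      exact K.inner_right_of_mem_orthogonal hU hξK
  have hquad : ∀ W ∈ D₂, ⟪ω W, ω W⟫ = Real.sin θ ^ 2 * ⟪W, W⟫ := by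
    intro W hW
    rw [real_inner_self_eq_norm_sq, real_inner_self_eq_norm_sq]
    rcases eq_or_ne W 0 with rfl | hW0
    · simp [orthogonalPart_zero hϕK hωK hVdec]
    have hWK := hD₂K hW
    refine norm_sq_eq_sin_sq_mul_of_inner_eq_zero (K.inner_right_of_mem_orthogonal
      (hϕK W hWK) (hωK W hWK)) (by rw [← hVdec W hWK, hnorm W hWK]) ?_
    rw [hslant W hW hW0, hnorm W hWK]
  intro W₁ hW₁ W₂ hW₂
  exact inner_map_eq_of_inner_self_map_eq
    (fun U hU W hW => orthogonalPart_add hϕK hωK hVdec (hD₂K hU) (hD₂K hW)) hquad hW₁ hW₂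

theorem inner_omega_omega_on_D2
    {V : Type*} [NormedAddCommGroup V] [InnerProductSpace ℝ V] [FiniteDimensional ℝ V]
    (φ : V →ₗ[ℝ] V) (ξ : V) (η : V →ₗ[ℝ] ℝ)
    (hφφ : ∀ X, φ (φ X) = -X + η X • ξ)
    (hηξ : η ξ = 1)
    (hφξ : φ ξ = 0)
    (hηφ : ∀ X, η (φ X) = 0)
    (hmet : ∀ X Y, ⟪φ X, φ Y⟫ = ⟪X, Y⟫ - η X * η Y)
    (K : Submodule ℝ V) (hξK : ξ ∈ Kᗮ)
    (ϕ ω : V → V)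
    (hϕK : ∀ U ∈ K, ϕ U ∈ K) (hωK : ∀ U ∈ K, ω U ∈ Kᗮ)
    (hVdec : ∀ U ∈ K, φ U = ϕ U + ω U)
    (B C : V → V)
    (hBK : ∀ X ∈ Kᗮ, B X ∈ K) (hCK : ∀ X ∈ Kᗮ, C X ∈ Kᗮ)
    (hHdec : ∀ X ∈ Kᗮ, φ X = B X + C X)
    (D₁ : Submodule ℝ V) (hD₁K : D₁ ≤ K) (hφD₁ : D₁.map φ = D₁)
    (D₂ : Submodule ℝ V) (hD₂ : D₂ = K ⊓ D₁ᗮ)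
    (θ : ℝ) (hslant : ∀ U ∈ D₂, U ≠ 0 → ‖ϕ U‖ = Real.cos θ * ‖φ U‖)
    :
    ∀ W₁ ∈ D₂, ∀ W₂ ∈ D₂, ⟪ω W₁, ω W₂⟫ = Real.sin θ ^ 2 * ⟪W₁, W₂⟫ :=
  inner_omega_omega_on_D2_general φ ξ η hηξ hφξ hmet K hξK ϕ ω hϕK hωK hVdec D₁ D₂ hD₂ θ hslant
end

section
/- The subspace μ is invariant under φ: if X ∈ K^⊥ satisfies ⟨X, ωU⟩ = 0 for all U ∈ K (i.e. X ∈ μ), then φX ∈ K^⊥ and ⟨φX, ωU⟩ = 0 for all U ∈ K (i.e. φX ∈ μ). -/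
open RealInnerProductSpace

theorem mu_invariant
    {V : Type*} [NormedAddCommGroup V] [InnerProductSpace ℝ V] [FiniteDimensional ℝ V]
    (φ : V →ₗ[ℝ] V) (ξ : V) (η : V →ₗ[ℝ] ℝ)
    (hφφ : ∀ X, φ (φ X) = -X + η X • ξ)
    (hηξ : η ξ = 1)
    (hφξ : φ ξ = 0)
    (hηφ : ∀ X, η (φ X) = 0)
    (hmet : ∀ X Y, ⟪φ X, φ Y⟫ = ⟪X, Y⟫ - η X * η Y)
    (K : Submodule ℝ V) (hξK : ξ ∈ Kᗮ)
    (ϕ ω : V → V)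
    (hϕK : ∀ U ∈ K, ϕ U ∈ K) (hωK : ∀ U ∈ K, ω U ∈ Kᗮ)
    (hVdec : ∀ U ∈ K, φ U = ϕ U + ω U)
    (B C : V → V)
    (hBK : ∀ X ∈ Kᗮ, B X ∈ K) (hCK : ∀ X ∈ Kᗮ, C X ∈ Kᗮ)
    (hHdec : ∀ X ∈ Kᗮ, φ X = B X + C X)
    :
    ∀ X ∈ Kᗮ, (∀ U ∈ K, ⟪X, ω U⟫ = 0) → φ X ∈ Kᗮ ∧ ∀ U ∈ K, ⟪φ X, ω U⟫ = 0 := by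
  -- η X = ⟪X, ξ⟫
  have hη : ∀ X : V, η X = ⟪X, ξ⟫ := by
    intro X
    have h := hmet X ξ
    rw [hφξ, hηξ, mul_one, inner_zero_right] at h
    linarith
  -- antisymmetry
  have hanti : ∀ X Y : V, ⟪φ X, Y⟫ = -⟪X, φ Y⟫ := by
    intro X Y
    have h := hmet X (φ Y)
    rw [hηφ, mul_zero, sub_zero, hφφ, inner_add_right, inner_neg_right,
      inner_smul_right] at h
    have hξ0 : ⟪φ X, ξ⟫ = 0 := by rw [← hη]; exact hηφ X
    rw [hξ0, mul_zero, add_zero] at h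
    linarith
  intro X hX hXμ
  have hηU : ∀ U ∈ K, η U = 0 := by
    intro U hU
    rw [hη, real_inner_comm]
    exact real_inner_comm U ξ ▸ hξK U hU
  constructor
  · intro U hU
    have h := hanti X U
    rw [hVdec U hU, inner_add_right] at h
    have h1 : ⟪X, ϕ U⟫ = 0 := real_inner_comm (ϕ U) X ▸ hX _ (hϕK U hU)
    have h2 : ⟪X, ω U⟫ = 0 := hXμ U hU
    rw [real_inner_comm, h, h1, h2]
    ring
  · intro U hU
    have hωeq : ω U = φ U - ϕ U := by rw [hVdec U hU]; abel
    rw [hωeq, inner_sub_right]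
    have h1 : ⟪φ X, φ U⟫ = 0 := by
      rw [hmet, hηU U hU, mul_zero, sub_zero, real_inner_comm]
      exact hX U hU
    have h2 : ⟪φ X, ϕ U⟫ = 0 := by
      have h := hanti X (ϕ U)
      have hϕU : ϕ U ∈ K := hϕK U hU
      have ha : ⟪X, ϕ (ϕ U)⟫ = 0 := by
        rw [real_inner_comm]; exact hX _ (hϕK _ hϕU)
      rw [hVdec _ hϕU, inner_add_right, ha, hXμ _ hϕU] at h
      simpa using h
    rw [h1, h2, sub_zero]
end

section
/- The subspace D₂ = span{Z₃, Z₄} is a slant distribution with slant angle α: with respect to the standard Euclidean inner product on ℝ⁹ (which is proportional to the Sasakian metric g_p on the relevant vectors at points p whose y-coordinates all vanish), for every nonzero W ∈ D₂ the orthogonal projection P(φW) of φ(W) onto D₂ satisfies ‖P(φW)‖ = cos α · ‖φ(W)‖; equivalently ‖P(φW)‖² = cos² α · ‖W‖². -/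
/-!
`Z₃, Z₄` is an orthonormal basis of `D₂`, and `φ` is skew-adjoint, so the compression `P ∘ φ`
of `φ` to `D₂` has zero diagonal entries: it is `⟪Z₄, φ Z₃⟫ = cos α` times the rotation by a
right angle. Hence `‖P(φW)‖ = cos α · ‖W‖`, and `‖φW‖ = ‖W‖` since `W` has no `z`-component.
-/

open Real

/-- The tensor `φ` of the standard Sasakian structure on `ℝ⁹` (coordinates ordered
`(x₁,x₂,x₃,x₄,y₁,y₂,y₃,y₄,z)`): it sends `(X₁,…,X₄,Y₁,…,Y₄,Z)` to `(Y₁,…,Y₄,-X₁,…,-X₄,0)`. -/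
noncomputable def phi9 (v : EuclideanSpace ℝ (Fin 9)) : EuclideanSpace ℝ (Fin 9) :=
  WithLp.toLp 2 (![v 4, v 5, v 6, v 7, -v 0, -v 1, -v 2, -v 3, 0] : Fin 9 → ℝ)

/-- `Z₃ = -cos α·∂/∂x₃ - sin α·∂/∂x₄`. -/
noncomputable def Z₃ (α : ℝ) : EuclideanSpace ℝ (Fin 9) :=
  WithLp.toLp 2 (![0, 0, -Real.cos α, -Real.sin α, 0, 0, 0, 0, 0] : Fin 9 → ℝ)

/-- `Z₄ = ∂/∂y₃`. -/
noncomputable def Z₄ : EuclideanSpace ℝ (Fin 9) := WithLp.toLp 2 (![0, 0, 0, 0, 0, 0, 1, 0, 0] : Fin 9 → ℝ)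

/-- The distribution `D₂ = span{Z₃, Z₄}`. -/
noncomputable def D₂ (α : ℝ) : Submodule ℝ (EuclideanSpace ℝ (Fin 9)) :=
  Submodule.span ℝ {Z₃ α, Z₄}

open Submodule RealInnerProductSpace

section OrthonormalPair

variable {E : Type*} [NormedAddCommGroup E] [InnerProductSpace ℝ E] {e₁ e₂ : E}

theorem norm_smul_add_smul_sq_of_orthonormal (h₁ : ‖e₁‖ = 1) (h₂ : ‖e₂‖ = 1)
    (h₁₂ : ⟪e₁, e₂⟫ = 0) (a b : ℝ) : ‖a • e₁ + b • e₂‖ ^ 2 = a ^ 2 + b ^ 2 := by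
  rw [norm_add_sq_real, norm_smul, norm_smul, real_inner_smul_left, real_inner_smul_right, h₁₂,
    h₁, h₂]
  simp

theorem starProjection_span_pair_of_orthonormal [(span ℝ {e₁, e₂}).HasOrthogonalProjection]
    (h₁ : ‖e₁‖ = 1) (h₂ : ‖e₂‖ = 1) (h₁₂ : ⟪e₁, e₂⟫ = 0) (v : E) :
    (span ℝ {e₁, e₂}).starProjection v = ⟪e₁, v⟫ • e₁ + ⟪e₂, v⟫ • e₂ := by
  refine eq_starProjection_of_mem_of_inner_eq_zero (mem_span_pair.mpr ⟨_, _, rfl⟩) ?_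
  rintro _ hw
  obtain ⟨c, d, rfl⟩ := mem_span_pair.mp hw
  have h₂₁ : ⟪e₂, e₁⟫ = 0 := by rw [real_inner_comm, h₁₂]
  simp only [inner_add_left, inner_add_right, inner_sub_left, real_inner_smul_left,
    real_inner_smul_right, real_inner_self_eq_norm_sq, h₁, h₂, h₁₂, h₂₁, real_inner_comm v]
  ring

theorem norm_starProjection_span_pair_sq_of_skew [(span ℝ {e₁, e₂}).HasOrthogonalProjection]
    (h₁ : ‖e₁‖ = 1) (h₂ : ‖e₂‖ = 1) (h₁₂ : ⟪e₁, e₂⟫ = 0) (T : E →ₗ[ℝ] E)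
    (hT : ∀ x y, ⟪T x, y⟫ = -⟪x, T y⟫) {W : E} (hW : W ∈ span ℝ {e₁, e₂}) :
    ‖(span ℝ {e₁, e₂}).starProjection (T W)‖ ^ 2 = ⟪e₂, T e₁⟫ ^ 2 * ‖W‖ ^ 2 := by
  obtain ⟨a, b, rfl⟩ := mem_span_pair.mp hW
  have hself : ∀ x, ⟪x, T x⟫ = 0 := fun x => by linarith [hT x x, real_inner_comm x (T x)]
  have h₁₂' : ⟪e₁, T e₂⟫ = -⟪e₂, T e₁⟫ := by rw [← hT, real_inner_comm]
  have hproj : (span ℝ {e₁, e₂}).starProjection (T (a • e₁ + b • e₂)) =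
      (-(b * ⟪e₂, T e₁⟫)) • e₁ + (a * ⟪e₂, T e₁⟫) • e₂ := by
    rw [starProjection_span_pair_of_orthonormal h₁ h₂ h₁₂]
    simp only [map_add, map_smul, inner_add_right, real_inner_smul_right, hself, h₁₂']
    congr 2 <;> ring
  rw [hproj, norm_smul_add_smul_sq_of_orthonormal h₁ h₂ h₁₂,
    norm_smul_add_smul_sq_of_orthonormal h₁ h₂ h₁₂]
  ring

end OrthonormalPair

noncomputable def phi9ₗ : EuclideanSpace ℝ (Fin 9) →ₗ[ℝ] EuclideanSpace ℝ (Fin 9) where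
  toFun := phi9
  map_add' x y := by
    ext i
    fin_cases i <;> simp [phi9, add_comm]
  map_smul' c x := by
    ext i
    fin_cases i <;> simp [phi9]

theorem inner_phi9_left (v w : EuclideanSpace ℝ (Fin 9)) : ⟪phi9 v, w⟫ = -⟪v, phi9 w⟫ := by
  simp [phi9, PiLp.inner_apply, Fin.sum_univ_succ]
  ring

theorem norm_phi9 {v : EuclideanSpace ℝ (Fin 9)} (hv : v 8 = 0) : ‖phi9 v‖ = ‖v‖ := by
  simp [EuclideanSpace.norm_eq, phi9, Fin.sum_univ_succ, hv]
  ring_nf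

theorem apply_eight_eq_zero_of_mem_D₂ {α : ℝ} {W : EuclideanSpace ℝ (Fin 9)} (hW : W ∈ D₂ α) :
    W 8 = 0 := by
  induction hW using span_induction with
  | mem x hx =>
    rcases hx with rfl | rfl <;> simp [Z₃, Z₄]
  | zero => rfl
  | add x y _ _ hx hy => simp [hx, hy]
  | smul c x _ hx => simp [hx]

theorem norm_Z₃ (α : ℝ) : ‖Z₃ α‖ = 1 := by
  simp [EuclideanSpace.norm_eq, Z₃, Fin.sum_univ_succ]

theorem norm_Z₄ : ‖Z₄‖ = 1 := by
  simp [EuclideanSpace.norm_eq, Z₄, Fin.sum_univ_succ]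

theorem inner_Z₃_Z₄ (α : ℝ) : ⟪Z₃ α, Z₄⟫ = 0 := by
  simp [Z₃, Z₄, PiLp.inner_apply, Fin.sum_univ_succ]

theorem inner_Z₄_phi9_Z₃ (α : ℝ) : ⟪Z₄, phi9 (Z₃ α)⟫ = cos α := by
  simp [Z₃, Z₄, phi9, PiLp.inner_apply, Fin.sum_univ_succ]

/-- `D₂ = span{Z₃, Z₄}` is a slant distribution with slant angle `α`:
with respect to the standard Euclidean inner product on `ℝ⁹`, for every nonzero `W ∈ D₂`
the orthogonal projection `P(φW)` of `φ(W)` onto `D₂` satisfies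
`‖P(φW)‖ = cos α · ‖φ(W)‖`; equivalently `‖P(φW)‖² = cos² α · ‖W‖²`. -/
theorem D2_slant (α : ℝ) (hα : α ∈ Set.Ioo 0 (π / 2)) :
    ∀ W ∈ D₂ α, W ≠ 0 →
      ‖(Submodule.orthogonalProjectionOnto (D₂ α) (phi9 W) : EuclideanSpace ℝ (Fin 9))‖ =
        Real.cos α * ‖phi9 W‖ ∧
      ‖(Submodule.orthogonalProjectionOnto (D₂ α) (phi9 W) : EuclideanSpace ℝ (Fin 9))‖ ^ 2 =
        Real.cos α ^ 2 * ‖W‖ ^ 2 := by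
  intro W hW _
  have hcos : 0 ≤ cos α := (cos_pos_of_mem_Ioo ⟨by linarith [hα.1, pi_pos], hα.2⟩).le
  have hsq : ‖(D₂ α).starProjection (phi9 W)‖ ^ 2 = cos α ^ 2 * ‖W‖ ^ 2 := by
    rw [← inner_Z₄_phi9_Z₃ α]
    exact norm_starProjection_span_pair_sq_of_skew (norm_Z₃ α) norm_Z₄ (inner_Z₃_Z₄ α) phi9ₗ
      inner_phi9_left hW
  refine ⟨?_, hsq⟩
  rw [norm_phi9 (apply_eight_eq_zero_of_mem_D₂ hW)]
  refine (pow_left_inj₀ (norm_nonneg _) (by positivity) two_ne_zero).mp ?_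
  rw [← starProjection_apply, hsq, mul_pow]
end
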